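/- Let B be an edge-clean, trail-reachable bidirected graph rooted at r, and let x be a vertex lying in some trail-undirectable component of B. Then the maximum number of pairwise edge-disjoint r–x trails in B equals 1. -/

import Mathlib

/-- A bidirected graph: a loopless multigraph together with a signing of each
half-edge (edge-endpoint incidence) by a sign (`true` = `+`, `false` = `-`). -/
structure BidirGraph (V : Type) (E : Type) where
  ends : E → V × V
  sign : E → V → Bool
  loopless : ∀ e : E, (ends e).1 ≠ (ends e).2

namespace BidirGraph

variable {V E : Type}

/-- The head of an oriented edge `(e, b)`: `b = true` orients `e` from its first
endpoint to its second endpoint. -/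
def ohead (B : BidirGraph V E) (oe : E × Bool) : V :=
  if oe.2 then (B.ends oe.1).2 else (B.ends oe.1).1

/-- The tail of an oriented edge. -/
def otail (B : BidirGraph V E) (oe : E × Bool) : V :=
  if oe.2 then (B.ends oe.1).1 else (B.ends oe.1).2

/-- `e` is incident with `v`. -/
def Incident (B : BidirGraph V E) (e : E) (v : V) : Prop :=
  (B.ends e).1 = v ∨ (B.ends e).2 = v

/-- `L` is a trail starting at `v`: a sequence of oriented edges, with no repeated
underlying edge, consecutive edges sharing a vertex at which they have opposite signs. -/
def IsTrailFrom (B : BidirGraph V E) (v : V) (L : List (E × Bool)) : Prop :=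
  (L.map Prod.fst).Nodup ∧
  (∀ oe ∈ L.head?, B.otail oe = v) ∧
  L.Chain' (fun a b => B.ohead a = B.otail b ∧ B.sign a.1 (B.ohead a) ≠ B.sign b.1 (B.ohead a))

/-- The final vertex of a trail starting at `v`. -/
def trailEnd (B : BidirGraph V E) (v : V) (L : List (E × Bool)) : V :=
  match L.getLast? with
  | none => v
  | some oe => B.ohead oe

/-- The internal vertices of a trail: the heads of all edges except the last one. -/
def Internal (B : BidirGraph V E) (L : List (E × Bool)) : List V :=
  (L.map B.ohead).dropLast

/-- An `r`-trail: a trail starting at `r` with no internal vertex equal to `r`. -/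
def IsRTrail (B : BidirGraph V E) (r : V) (L : List (E × Bool)) : Prop :=
  B.IsTrailFrom r L ∧ ∀ v ∈ B.Internal L, v ≠ r

/-- The trail `L` ends at vertex `w` with sign `α`. -/
def EndsAtSigned (B : BidirGraph V E) (L : List (E × Bool)) (w : V) (α : Bool) : Prop :=
  ∃ oe, L.getLast? = some oe ∧ B.ohead oe = w ∧ B.sign oe.1 w = α

/-- A path: a trail with no repeated vertex. -/
def IsPathFrom (B : BidirGraph V E) (v : V) (L : List (E × Bool)) : Prop :=
  B.IsTrailFrom v L ∧ (v :: L.map B.ohead).Nodup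

/-- An almost path: a trail that is trivial or becomes a path after removing its last edge. -/
def IsAlmostPathFrom (B : BidirGraph V E) (v : V) (L : List (E × Bool)) : Prop :=
  B.IsTrailFrom v L ∧ (v :: B.Internal L).Nodup

/-- An edge is trail-undirectable if there are `r`-trails ending in both of its orientations. -/
def TrailUndirectable (B : BidirGraph V E) (r : V) (e : E) : Prop :=
  (∃ L, B.IsRTrail r L ∧ L.getLast? = some (e, true)) ∧
  (∃ L, B.IsRTrail r L ∧ L.getLast? = some (e, false))

/-- `(e, b)` is the natural orientation of the trail-directable edge `e`: `r`-trails end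
in the orientation `(e, b)` but not in the opposite orientation. -/
def NatOrient (B : BidirGraph V E) (r : V) (e : E) (b : Bool) : Prop :=
  (∃ L, B.IsRTrail r L ∧ L.getLast? = some (e, b)) ∧
  ¬ ∃ L, B.IsRTrail r L ∧ L.getLast? = some (e, !b)

/-- An edge is trail-directable if exactly one of its orientations is the final oriented
edge of some `r`-trail. -/
def TrailDirectable (B : BidirGraph V E) (r : V) (e : E) : Prop :=
  ∃ b, B.NatOrient r e b

/-- `B` is trail-reachable: every edge is the final edge of some `r`-trail. -/
def TrailReachable (B : BidirGraph V E) (r : V) : Prop :=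
  ∀ e : E, ∃ L b, B.IsRTrail r L ∧ L.getLast? = some (e, b)

/-- Adjacency of trail-undirectable edges: both undirectable and sharing an endpoint. -/
def UStep (B : BidirGraph V E) (r : V) (a b : E) : Prop :=
  B.TrailUndirectable r a ∧ B.TrailUndirectable r b ∧ ∃ v, B.Incident a v ∧ B.Incident b v

/-- `C` is (the edge set of) a nontrivial trail-undirectable component of `B`: the set of
trail-undirectable edges connected to some trail-undirectable edge `e` inside the subgraph
induced by the trail-undirectable edges. -/
def IsUComp (B : BidirGraph V E) (r : V) (C : Set E) : Prop :=
  ∃ e, B.TrailUndirectable r e ∧ C = {f | Relation.ReflTransGen (B.UStep r) e f}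

/-- `v` is a vertex of the edge set `C` (i.e. an endpoint of one of its edges). -/
def VC (B : BidirGraph V E) (C : Set E) (v : V) : Prop :=
  ∃ e ∈ C, B.Incident e v

/-- `B` is edge-clean: the root lies in no nontrivial trail-undirectable component. -/
def EdgeClean (B : BidirGraph V E) (r : V) : Prop :=
  ¬ ∃ C : Set E, B.IsUComp r C ∧ B.VC C r

/-- `B` is clean: there is no nontrivial almost path starting and ending at `r`. -/
def Clean (B : BidirGraph V E) (r : V) : Prop :=
  ¬ ∃ L, L ≠ ([] : List (E × Bool)) ∧ B.IsAlmostPathFrom r L ∧ B.trailEnd r L = r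

/-- A vertex is trail-solid if it is the root, or the head of the natural orientation of a
trail-directable edge, or incident with no trail-undirectable edge. -/
def TrailSolid (B : BidirGraph V E) (r v : V) : Prop :=
  v = r ∨ (∃ e b, B.NatOrient r e b ∧ B.ohead (e, b) = v) ∨
    (∀ e : E, B.Incident e v → ¬ B.TrailUndirectable r e)

/-- Two trails are edge-disjoint if no underlying edge occurs in both. -/
def EdgeDisj (L₁ L₂ : List (E × Bool)) : Prop :=
  ∀ (e : E) (b₁ b₂ : Bool), (e, b₁) ∈ L₁ → (e, b₂) ∈ L₂ → False

/-- Two paths are internally vertex-disjoint if they share no internal vertex. -/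
def IntDisj (B : BidirGraph V E) (L₁ L₂ : List (E × Bool)) : Prop :=
  ∀ w : V, w ∈ B.Internal L₁ → w ∈ B.Internal L₂ → False

end BidirGraph

/-!
If two edge-disjoint `r`-trails enter a vertex `w ≠ r` with opposite signs, following the first
and then the second backwards is again an `r`-trail, so the first edge of the second trail is
trail-undirectable; it is incident with `r`, against edge-cleanness.

Now let `P`, `Q` be edge-disjoint `r`-trails entering `w ≠ r` with the same sign and `Z` an
`r`-trail entering `w` with the other sign. By the above, `Z` shares an edge with `P` or `Q`;
let `g` be the last such edge of `Z`, say on `P`. If `P` and `Z` traverse `g` in the same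
direction, `P` rerouted along `Z` after `g` enters `w` with the sign of `Z` and avoids `Q`.
Otherwise `g` is trail-undirectable, and the part of `P` before `g`, `Q` followed by the end of
`Z` backwards, and the part of `Z` up to `g` form a smaller such configuration at the head of `g`.

A vertex `x` of a trail-undirectable component lies on an undirectable edge `e`; the `r`-trails
ending in the two orientations of `e` yield `r`-trails entering `x` with both signs, so no two
edge-disjoint `r`–`x` trails exist.
-/

namespace BidirGraph

variable {V E : Type} {B : BidirGraph V E} {r : V}

section Orientation

def flipOrient (oe : E × Bool) : E × Bool := (oe.1, !oe.2)

@[simp] lemma fst_flipOrient (oe : E × Bool) : (flipOrient oe).1 = oe.1 := rfl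

@[simp] lemma ohead_flipOrient (oe : E × Bool) : B.ohead (flipOrient oe) = B.otail oe := by
  obtain ⟨e, b⟩ := oe; cases b <;> rfl

@[simp] lemma otail_flipOrient (oe : E × Bool) : B.otail (flipOrient oe) = B.ohead oe := by
  obtain ⟨e, b⟩ := oe; cases b <;> rfl

lemma incident_ohead (oe : E × Bool) : B.Incident oe.1 (B.ohead oe) := by
  obtain ⟨e, b⟩ := oe; cases b <;> simp [ohead, Incident]

lemma incident_otail (oe : E × Bool) : B.Incident oe.1 (B.otail oe) := by
  simpa using incident_ohead (B := B) (flipOrient oe)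

lemma exists_ohead_eq_of_incident {e : E} {x : V} (h : B.Incident e x) :
    ∃ b, B.ohead (e, b) = x :=
  h.elim (fun h => ⟨false, by simpa [ohead] using h⟩) (fun h => ⟨true, by simpa [ohead] using h⟩)

variable (B) in
/-- The step relation of `IsTrailFrom`. -/
def Continues (a b : E × Bool) : Prop :=
  B.ohead a = B.otail b ∧ B.sign a.1 (B.ohead a) ≠ B.sign b.1 (B.ohead a)

lemma Continues.flip {a b : E × Bool} (h : B.Continues a b) :
    B.Continues (flipOrient b) (flipOrient a) := by
  obtain ⟨hab, hsign⟩ := h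
  refine ⟨by simp [hab], ?_⟩
  simpa [← hab] using hsign.symm

def reverseTrail (T : List (E × Bool)) : List (E × Bool) := (T.map flipOrient).reverse

@[simp] lemma length_reverseTrail (T : List (E × Bool)) : (reverseTrail T).length = T.length := by
  simp [reverseTrail]

lemma mem_reverseTrail {T : List (E × Bool)} {e : E} {b : Bool} :
    (e, b) ∈ reverseTrail T ↔ (e, !b) ∈ T := by
  constructor
  · simp only [reverseTrail, List.mem_reverse, List.mem_map]
    rintro ⟨oe, hoe, h⟩
    cases h
    simpa [flipOrient] using hoe
  · intro h
    simpa [reverseTrail, flipOrient] using List.mem_map_of_mem (f := flipOrient) h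

lemma map_fst_reverseTrail (T : List (E × Bool)) :
    (reverseTrail T).map Prod.fst = (T.map Prod.fst).reverse := by
  simp only [reverseTrail, List.map_reverse, List.map_map]
  rfl

lemma head?_reverseTrail (T : List (E × Bool)) :
    (reverseTrail T).head? = T.getLast?.map flipOrient := by
  simp [reverseTrail, List.head?_reverse, List.getLast?_map]

lemma getLast?_reverseTrail (T : List (E × Bool)) :
    (reverseTrail T).getLast? = T.head?.map flipOrient := by
  simp [reverseTrail, List.getLast?_reverse, List.head?_map]

lemma isChain_reverseTrail {T : List (E × Bool)} (h : T.IsChain B.Continues) :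
    (reverseTrail T).IsChain B.Continues := by
  rw [reverseTrail, List.isChain_reverse, List.isChain_map]
  exact h.imp fun _ _ => Continues.flip

lemma tail_map_otail {T : List (E × Bool)} (h : T.IsChain B.Continues) :
    (T.map B.otail).tail = (T.map B.ohead).dropLast := by
  induction T with
  | nil => rfl
  | cons a T ih =>
    cases T with
    | nil => rfl
    | cons b T =>
      rw [List.isChain_cons_cons] at h
      simp only [List.map_cons, List.tail_cons] at ih ⊢
      rw [List.dropLast_cons_of_ne_nil (by simp), ← ih h.2, h.1.1]

lemma internal_reverseTrail {T : List (E × Bool)} (h : T.IsChain B.Continues) :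
    B.Internal (reverseTrail T) = (B.Internal T).reverse := by
  simp only [Internal, reverseTrail, List.map_reverse, List.map_map]
  rw [List.dropLast_reverse, ← tail_map_otail h]
  congr 3
  funext oe
  simp

end Orientation

section Trails

lemma internal_append {P T : List (E × Bool)} (hT : T ≠ []) :
    B.Internal (P ++ T) = P.map B.ohead ++ B.Internal T := by
  rw [Internal, List.map_append, List.dropLast_append_of_ne_nil (by simpa using hT)]
  rfl

lemma IsRTrail.otail_eq {oe : E × Bool} {L : List (E × Bool)} (h : B.IsRTrail r (oe :: L)) :
    B.otail oe = r :=
  h.1.2.1 oe rfl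

lemma IsRTrail.ohead_ne {P T : List (E × Bool)} (h : B.IsRTrail r (P ++ T)) (hT : T ≠ [])
    {a : E × Bool} (ha : a ∈ P) : B.ohead a ≠ r :=
  h.2 _ (by rw [internal_append hT]; exact List.mem_append_left _ (List.mem_map_of_mem ha))

lemma IsRTrail.of_append {P T : List (E × Bool)} (h : B.IsRTrail r (P ++ T)) :
    B.IsRTrail r P := by
  obtain ⟨⟨hnd, hhd, hch⟩, hint⟩ := h
  refine ⟨⟨(List.map_append .. ▸ hnd).of_append_left, ?_, (List.isChain_append.1 hch).1⟩, ?_⟩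
  · intro oe hoe
    exact hhd oe (by simp [List.head?_append, Option.mem_def.1 hoe])
  · rcases eq_or_ne T [] with rfl | hT
    · simpa using hint
    · intro v hv
      rw [internal_append hT] at hint
      exact hint v (List.mem_append_left _ (List.dropLast_subset _ hv))

lemma continues_of_isChain {P T : List (E × Bool)} {p q : E × Bool}
    (h : (P ++ p :: q :: T).IsChain B.Continues) : B.Continues p q :=
  (List.isChain_cons_cons.1 (h.suffix (List.suffix_append _ _))).1

variable (B r) in
/-- The conditions on an `r`-trail that pass to its final segments and to its reverse. -/
structure IsSegment (T : List (E × Bool)) : Prop where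
  nodup : (T.map Prod.fst).Nodup
  isChain : T.IsChain B.Continues
  internal_ne : ∀ v ∈ B.Internal T, v ≠ r

lemma IsRTrail.isSegment {T : List (E × Bool)} (h : B.IsRTrail r T) : IsSegment B r T :=
  ⟨h.1.1, h.1.2.2, h.2⟩

lemma IsSegment.of_append {P T : List (E × Bool)} (h : IsSegment B r (P ++ T)) :
    IsSegment B r T := by
  refine ⟨(List.map_append .. ▸ h.nodup).of_append_right, (List.isChain_append.1 h.isChain).2.1,
    ?_⟩
  rcases eq_or_ne T [] with rfl | hT
  · simp [Internal]
  · intro v hv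
    exact h.internal_ne v (by rw [internal_append hT]; exact List.mem_append_right _ hv)

lemma IsSegment.reverseTrail {T : List (E × Bool)} (h : IsSegment B r T) :
    IsSegment B r (reverseTrail T) := by
  refine ⟨by rw [map_fst_reverseTrail]; exact List.nodup_reverse.2 h.nodup,
    isChain_reverseTrail h.isChain, ?_⟩
  intro v hv
  rw [internal_reverseTrail h.isChain, List.mem_reverse] at hv
  exact h.internal_ne v hv

end Trails

section Disjointness

variable {P Q T : List (E × Bool)}

lemma EdgeDisj.symm (h : EdgeDisj P Q) : EdgeDisj Q P :=
  fun e b₁ b₂ h₁ h₂ => h e b₂ b₁ h₂ h₁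

lemma edgeDisj_comm : EdgeDisj P Q ↔ EdgeDisj Q P :=
  ⟨EdgeDisj.symm, EdgeDisj.symm⟩

lemma EdgeDisj.mono {P' Q' : List (E × Bool)} (h : EdgeDisj P Q) (hP : P' ⊆ P) (hQ : Q' ⊆ Q) :
    EdgeDisj P' Q' :=
  fun e b₁ b₂ h₁ h₂ => h e b₁ b₂ (hP h₁) (hQ h₂)

lemma edgeDisj_append_left : EdgeDisj (P ++ Q) T ↔ EdgeDisj P T ∧ EdgeDisj Q T := by
  simp only [EdgeDisj, List.mem_append]
  exact ⟨fun h => ⟨fun e b₁ b₂ h₁ => h e b₁ b₂ (.inl h₁), fun e b₁ b₂ h₁ => h e b₁ b₂ (.inr h₁)⟩,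
    fun h e b₁ b₂ h₁ => h₁.elim (h.1 e b₁ b₂) (h.2 e b₁ b₂)⟩

lemma edgeDisj_append_right : EdgeDisj T (P ++ Q) ↔ EdgeDisj T P ∧ EdgeDisj T Q := by
  rw [edgeDisj_comm, edgeDisj_append_left]
  exact and_congr edgeDisj_comm edgeDisj_comm

lemma edgeDisj_reverseTrail_right : EdgeDisj P (reverseTrail T) ↔ EdgeDisj P T :=
  ⟨fun h e b₁ b₂ h₁ h₂ => h e b₁ (!b₂) h₁ (mem_reverseTrail.2 (by simpa using h₂)),
    fun h e b₁ b₂ h₁ h₂ => h e b₁ (!b₂) h₁ (mem_reverseTrail.1 h₂)⟩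

lemma EdgeDisj.nodup_map_fst_append (h : EdgeDisj P T) (hP : (P.map Prod.fst).Nodup)
    (hT : (T.map Prod.fst).Nodup) : ((P ++ T).map Prod.fst).Nodup := by
  rw [List.map_append, List.nodup_append]
  refine ⟨hP, hT, ?_⟩
  rintro _ hp _ ht rfl
  obtain ⟨⟨e, b₁⟩, he₁, rfl⟩ := List.mem_map.1 hp
  obtain ⟨⟨e', b₂⟩, he₂, he⟩ := List.mem_map.1 ht
  cases he
  exact h e b₁ b₂ he₁ he₂

end Disjointness

section Ends

variable {L : List (E × Bool)} {x : V} {α : Bool}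

lemma EndsAtSigned.ne_nil (h : B.EndsAtSigned L x α) : L ≠ [] := by
  rintro rfl
  simp [EndsAtSigned] at h

lemma EndsAtSigned.trailEnd_eq (h : B.EndsAtSigned L x α) (v : V) : B.trailEnd v L = x := by
  obtain ⟨oe, hl, hx, -⟩ := h
  simp [trailEnd, hl, hx]

lemma exists_endsAtSigned_of_trailEnd_eq (h : B.trailEnd r L = x) (hx : x ≠ r) :
    ∃ α, B.EndsAtSigned L x α := by
  unfold trailEnd at h
  split at h
  · exact absurd h.symm hx
  · exact ⟨_, _, ‹_›, h, rfl⟩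

lemma endsAtSigned_of_continues {p oe : E × Bool} (hl : L.getLast? = some p)
    (h : B.Continues p oe) : B.EndsAtSigned L (B.otail oe) (!B.sign oe.1 (B.otail oe)) :=
  ⟨p, hl, h.1, by rw [← h.1]; exact Bool.eq_not_iff.2 h.2⟩

lemma endsAtSigned_append_reverseTrail {Q Z : List (E × Bool)} {a : E × Bool}
    (hch : (a :: Z).IsChain B.Continues) (hQ : B.EndsAtSigned Q x α)
    (hZ : B.EndsAtSigned (a :: Z) x (!α)) :
    B.EndsAtSigned (Q ++ reverseTrail Z) (B.ohead a) (!B.sign a.1 (B.ohead a)) := by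
  rcases Z with _ | ⟨t, Z⟩
  · obtain ⟨_, hl, rfl, hs⟩ := hZ
    obtain rfl : a = _ := by simpa using hl
    simpa [reverseTrail, hs] using hQ
  · simpa using endsAtSigned_of_continues (L := Q ++ reverseTrail (t :: Z))
      (by simp [List.getLast?_append, getLast?_reverseTrail]) (List.isChain_cons_cons.1 hch).1.flip

end Ends

lemma IsRTrail.append {P T : List (E × Bool)} {p : E × Bool} (hP : B.IsRTrail r (P ++ [p]))
    (hT : IsSegment B r T) (hdisj : EdgeDisj (P ++ [p]) T)
    (hjunc : ∀ t ∈ T.head?, B.Continues p t) (hend : T ≠ [] → B.ohead p ≠ r) :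
    B.IsRTrail r (P ++ [p] ++ T) := by
  obtain ⟨⟨hnd, hhd, hch⟩, hint⟩ := hP
  refine ⟨⟨hdisj.nodup_map_fst_append hnd hT.nodup, ?_, hch.append hT.isChain ?_⟩,
    ?_⟩
  · rwa [List.head?_append_of_ne_nil _ (by simp)]
  · intro a ha
    obtain rfl : p = a := by simpa using ha
    exact hjunc
  · rcases eq_or_ne T [] with rfl | hT'
    · simpa using hint
    · intro v hv
      simp only [internal_append hT', List.map_append, List.map_singleton, List.mem_append,
        List.mem_singleton] at hv
      rcases hv with (hv | rfl) | hv
      · exact hint v (by simpa [Internal] using hv)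
      · exact hend hT'
      · exact hT.internal_ne v hv

lemma IsRTrail.append_reverseTrail {P Z : List (E × Bool)} {w : V} {α : Bool}
    (hP : B.IsRTrail r P) (hPend : B.EndsAtSigned P w α) (hw : w ≠ r) (hZ : IsSegment B r Z)
    (hZend : Z ≠ [] → B.EndsAtSigned Z w (!α)) (hdisj : EdgeDisj P Z) :
    B.IsRTrail r (P ++ reverseTrail Z) := by
  obtain ⟨p, hpl, hpw, hps⟩ := hPend
  obtain ⟨P, rfl⟩ := List.getLast?_eq_some_iff.1 hpl
  refine hP.append hZ.reverseTrail (edgeDisj_reverseTrail_right.2 hdisj) ?_ fun _ => hpw ▸ hw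
  intro t ht
  rw [head?_reverseTrail] at ht
  obtain ⟨z, hzl, rfl⟩ := Option.mem_map.1 ht
  obtain ⟨z', hz'l, hzw, hzs⟩ := hZend (by rintro rfl; simp at hzl)
  obtain rfl : z' = z := Option.some_inj.1 (hz'l.symm.trans hzl)
  exact ⟨by simp [hpw, hzw], by simp [hpw, hps, hzs]⟩

section EdgeClean

lemma trailUndirectable_of_exists {e : E} {b : Bool}
    (h₁ : ∃ L, B.IsRTrail r L ∧ L.getLast? = some (e, b))
    (h₂ : ∃ L, B.IsRTrail r L ∧ L.getLast? = some (e, !b)) : B.TrailUndirectable r e := by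
  cases b
  exacts [⟨h₂, h₁⟩, ⟨h₁, h₂⟩]

lemma TrailUndirectable.exists_rTrail {e : E} (h : B.TrailUndirectable r e) (b : Bool) :
    ∃ L, B.IsRTrail r L ∧ L.getLast? = some (e, b) := by
  cases b
  exacts [h.2, h.1]

lemma EdgeClean.ne_root_of_incident (hclean : B.EdgeClean r) {e : E} {x : V}
    (he : B.TrailUndirectable r e) (hx : B.Incident e x) : x ≠ r := by
  rintro rfl
  exact hclean ⟨_, ⟨e, he, rfl⟩, e, .refl, hx⟩

theorem EdgeClean.not_edgeDisj_of_opposite_signs (hclean : B.EdgeClean r) {w : V} {α : Bool}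
    {P Z : List (E × Bool)} (hw : w ≠ r) (hP : B.IsRTrail r P) (hZ : B.IsRTrail r Z)
    (hPend : B.EndsAtSigned P w α) (hZend : B.EndsAtSigned Z w (!α)) : ¬ EdgeDisj P Z := by
  intro hdisj
  obtain ⟨z, Z, rfl⟩ := List.exists_cons_of_ne_nil hZend.ne_nil
  have hback := hP.append_reverseTrail hPend hw hZ.isSegment (fun _ => hZend) hdisj
  have hund : B.TrailUndirectable r z.1 := trailUndirectable_of_exists (b := z.2)
    ⟨[z], IsRTrail.of_append (T := Z) hZ, rfl⟩
    ⟨_, hback, by simp [List.getLast?_append, getLast?_reverseTrail, flipOrient]⟩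
  exact hclean.ne_root_of_incident hund (incident_otail z) hZ.otail_eq

end EdgeClean

section Conflict

variable (B r) in
structure IsConflict (w : V) (α : Bool) (P Q Z : List (E × Bool)) : Prop where
  ne_root : w ≠ r
  isRTrail_left : B.IsRTrail r P
  isRTrail_right : B.IsRTrail r Q
  isRTrail_opp : B.IsRTrail r Z
  endsAt_left : B.EndsAtSigned P w α
  endsAt_right : B.EndsAtSigned Q w α
  endsAt_opp : B.EndsAtSigned Z w (!α)
  edgeDisj : EdgeDisj P Q

variable {w : V} {α : Bool} {P Q Z Z₁ Z₂ : List (E × Bool)} {g : E} {c : Bool}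

lemma IsConflict.symm (h : IsConflict B r w α P Q Z) :
    IsConflict B r w α Q P Z :=
  ⟨h.ne_root, h.isRTrail_right, h.isRTrail_left, h.isRTrail_opp, h.endsAt_right, h.endsAt_left,
    h.endsAt_opp, h.edgeDisj.symm⟩

lemma exists_last_shared_edge {L : List (E × Bool)} (h : ¬ EdgeDisj L Z) :
    ∃ Z₁ g c d Z₂, Z = Z₁ ++ [(g, c)] ++ Z₂ ∧ (g, d) ∈ L ∧ EdgeDisj L Z₂ := by
  induction Z using List.reverseRecOn with
  | nil => exact absurd (fun _ _ _ _ h => by simp at h) h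
  | append_singleton Z z ih =>
    by_cases hz : EdgeDisj L [z]
    · obtain ⟨Z₁, g, c, d, Z₂, rfl, hg, hZ₂⟩ :=
        ih fun hZ => h (edgeDisj_append_right.2 ⟨hZ, hz⟩)
      exact ⟨Z₁, g, c, d, Z₂ ++ [z], by simp, hg, edgeDisj_append_right.2 ⟨hZ₂, hz⟩⟩
    · simp only [EdgeDisj, List.mem_singleton, not_forall] at hz
      obtain ⟨g, d, c, hg, rfl, -⟩ := hz
      exact ⟨Z, g, c, d, [], by simp, hg, fun _ _ _ _ h => by simp at h⟩

lemma IsConflict.false_of_shared_same_orientation (hclean : B.EdgeClean r)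
    {P₁ P₂ : List (E × Bool)}
    (h : IsConflict B r w α (P₁ ++ [(g, c)] ++ P₂) Q (Z₁ ++ [(g, c)] ++ Z₂))
    (hZ₂ : EdgeDisj (P₁ ++ [(g, c)] ++ P₂ ++ Q) Z₂) : False := by
  have hZ := h.isRTrail_opp
  obtain ⟨hdisjP, hdisjQ⟩ := edgeDisj_append_left.1 hZ₂
  have hW : B.IsRTrail r (P₁ ++ [(g, c)] ++ Z₂) := by
    refine h.isRTrail_left.of_append.append hZ.isSegment.of_append
      (hdisjP.mono (List.subset_append_left _ _) (List.Subset.refl _))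
      (fun t ht => (List.isChain_append.1 hZ.isSegment.isChain).2.2 _ (by simp) t ht)
      fun hne => hZ.ohead_ne hne (by simp)
  have hWend : B.EndsAtSigned (P₁ ++ [(g, c)] ++ Z₂) w (!α) := by
    simpa [EndsAtSigned, List.getLast?_append_cons] using h.endsAt_opp
  refine hclean.not_edgeDisj_of_opposite_signs h.ne_root h.isRTrail_right hW h.endsAt_right hWend
    (edgeDisj_append_right.2 ⟨?_, hdisjQ⟩)
  exact h.edgeDisj.symm.mono (List.Subset.refl _) (List.subset_append_left _ _)

lemma IsConflict.at_ohead_of_shared_opposite_orientation (hclean : B.EdgeClean r)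
    {P₁ P₂ : List (E × Bool)}
    (h : IsConflict B r w α (P₁ ++ [(g, !c)] ++ P₂) Q (Z₁ ++ [(g, c)] ++ Z₂))
    (hZ₂ : EdgeDisj (P₁ ++ [(g, !c)] ++ P₂ ++ Q) Z₂) :
    IsConflict B r (B.ohead (g, c)) (!B.sign g (B.ohead (g, c))) P₁ (Q ++ reverseTrail Z₂)
      (Z₁ ++ [(g, c)]) := by
  have hP := h.isRTrail_left.of_append
  have hZ := h.isRTrail_opp
  have hflip : B.otail (g, !c) = B.ohead (g, c) := otail_flipOrient (g, c)
  have hw : B.ohead (g, c) ≠ r := hclean.ne_root_of_incident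
    (trailUndirectable_of_exists ⟨_, hZ.of_append, List.getLast?_concat⟩
      ⟨_, hP, List.getLast?_concat⟩) (incident_ohead (g, c))
  have hZtail : B.EndsAtSigned ((g, c) :: Z₂) w (!α) := by
    simpa [EndsAtSigned, List.getLast?_append_cons] using h.endsAt_opp
  obtain ⟨hdisjP, hdisjQ⟩ := edgeDisj_append_left.1 hZ₂
  obtain rfl | ⟨P₁, p, rfl⟩ := List.eq_nil_or_concat' P₁
  · exact absurd (hflip ▸ IsRTrail.otail_eq (L := []) hP) hw
  have hjunc : B.Continues p (g, !c) :=
    continues_of_isChain (P := P₁) (T := []) (by simpa using hP.isSegment.isChain)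
  refine ⟨hw, hP.of_append, ?_, hZ.of_append, ?_, ?_, ⟨(g, c), List.getLast?_concat, rfl, by simp⟩,
    ?_⟩
  · refine h.isRTrail_right.append_reverseTrail h.endsAt_right h.ne_root hZ.isSegment.of_append
      (fun hne => ?_) hdisjQ
    obtain ⟨t, Z₂, rfl⟩ := List.exists_cons_of_ne_nil hne
    simpa [EndsAtSigned] using hZtail
  · exact hflip ▸ endsAtSigned_of_continues List.getLast?_concat hjunc
  · exact endsAtSigned_append_reverseTrail (hZ.isSegment.isChain.suffix ⟨Z₁, by simp⟩)
      h.endsAt_right hZtail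
  · have hsub : P₁ ++ [p] ⊆ P₁ ++ [p] ++ [(g, !c)] ++ P₂ :=
      List.Subset.trans (List.subset_append_left _ _) (List.subset_append_left _ _)
    exact edgeDisj_append_right.2 ⟨h.edgeDisj.mono hsub (List.Subset.refl _),
      edgeDisj_reverseTrail_right.2 (hdisjP.mono hsub (List.Subset.refl _))⟩

lemma EdgeClean.exists_smaller_conflict (hclean : B.EdgeClean r) (h : IsConflict B r w α P Q Z) :
    ∃ w' α' P' Q' Z', IsConflict B r w' α' P' Q' Z' ∧
      P'.length + Q'.length + 2 * Z'.length < P.length + Q.length + 2 * Z.length := by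
  have hPZ : ¬ EdgeDisj (P ++ Q) Z := fun hdisj =>
    hclean.not_edgeDisj_of_opposite_signs h.ne_root h.isRTrail_left h.isRTrail_opp h.endsAt_left
      h.endsAt_opp (edgeDisj_append_left.1 hdisj).1
  obtain ⟨Z₁, g, c, d, Z₂, rfl, hg, hZ₂⟩ := exists_last_shared_edge hPZ
  wlog hgP : (g, d) ∈ P generalizing P Q
  · obtain ⟨w', α', P', Q', Z', h', hlt⟩ := this h.symm
      (by simpa [edgeDisj_append_left, and_comm] using hPZ) (by simpa [or_comm] using hg)
      (by simpa [edgeDisj_append_left, and_comm] using hZ₂)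
      ((List.mem_append.1 hg).resolve_left hgP)
    exact ⟨w', α', P', Q', Z', h', by omega⟩
  obtain ⟨P₁, P₂, rfl⟩ := List.append_of_mem hgP
  rw [show P₁ ++ (g, d) :: P₂ = P₁ ++ [(g, d)] ++ P₂ by simp] at h hZ₂
  rcases Bool.eq_or_eq_not d c with rfl | rfl
  · exact (h.false_of_shared_same_orientation hclean hZ₂).elim
  · exact ⟨_, _, _, _, _, h.at_ohead_of_shared_opposite_orientation hclean hZ₂, by simp; omega⟩

end Conflict

theorem EdgeClean.not_isConflict (hclean : B.EdgeClean r) {w : V} {α : Bool}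
    {P Q Z : List (E × Bool)} : ¬ IsConflict B r w α P Q Z := by
  intro h
  obtain ⟨_, _, _, _, _, h', hlt⟩ := hclean.exists_smaller_conflict h
  exact hclean.not_isConflict h'
termination_by P.length + Q.length + 2 * Z.length

lemma exists_trailUndirectable_incident_of_vc {x : V} (hx : ∃ C, B.IsUComp r C ∧ B.VC C x) :
    ∃ e, B.TrailUndirectable r e ∧ B.Incident e x := by
  obtain ⟨_, ⟨e₀, he₀, rfl⟩, e, he, hinc⟩ := hx
  refine ⟨e, ?_, hinc⟩
  rcases Relation.ReflTransGen.cases_tail he with rfl | ⟨_, _, hstep⟩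
  exacts [he₀, hstep.2.1]

lemma TrailUndirectable.exists_endsAtSigned {e : E} {x : V} (he : B.TrailUndirectable r e)
    (hinc : B.Incident e x) (hx : x ≠ r) (α : Bool) :
    ∃ Z, B.IsRTrail r Z ∧ B.EndsAtSigned Z x α := by
  obtain ⟨b, hb⟩ := exists_ohead_eq_of_incident hinc
  have hflip : B.otail (e, !b) = x := hb ▸ otail_flipOrient (e, b)
  obtain ⟨A, hA, hAl⟩ := he.exists_rTrail b
  obtain ⟨D, hD, hDl⟩ := he.exists_rTrail (!b)
  obtain ⟨D, rfl⟩ := List.getLast?_eq_some_iff.1 hDl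
  obtain rfl | ⟨D, d, rfl⟩ := List.eq_nil_or_concat' D
  · exact absurd (hflip ▸ IsRTrail.otail_eq (L := []) hD) hx
  -- the final edge of `D` enters `x` with the sign opposite to that of `e`
  have hjunc : B.Continues d (e, !b) :=
    continues_of_isChain (P := D) (T := []) (by simpa using hD.isSegment.isChain)
  rcases Bool.eq_or_eq_not α (B.sign e x) with rfl | rfl
  · exact ⟨A, hA, _, hAl, hb, rfl⟩
  · exact ⟨_, hD.of_append, hflip ▸ endsAtSigned_of_continues List.getLast?_concat hjunc⟩

end BidirGraph

open BidirGraph in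
theorem stmt6_general {V E : Type} (B : BidirGraph V E) (r : V)
    (hclean : B.EdgeClean r)
    (x : V) (hx : ∃ C : Set E, B.IsUComp r C ∧ B.VC C x) :
    (∃ L, B.IsRTrail r L ∧ B.trailEnd r L = x) ∧
      ¬ ∃ L₁ L₂, (B.IsRTrail r L₁ ∧ B.trailEnd r L₁ = x) ∧
        (B.IsRTrail r L₂ ∧ B.trailEnd r L₂ = x) ∧ BidirGraph.EdgeDisj L₁ L₂ := by
  obtain ⟨e, he, hinc⟩ := exists_trailUndirectable_incident_of_vc hx
  have hxr : x ≠ r := hclean.ne_root_of_incident he hinc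
  have hsigned := he.exists_endsAtSigned hinc hxr
  refine ⟨?_, ?_⟩
  · obtain ⟨A, hA, hAend⟩ := hsigned true
    exact ⟨A, hA, hAend.trailEnd_eq r⟩
  · rintro ⟨L₁, L₂, ⟨h₁, hx₁⟩, ⟨h₂, hx₂⟩, hdisj⟩
    obtain ⟨α, hend₁⟩ := exists_endsAtSigned_of_trailEnd_eq hx₁ hxr
    obtain ⟨β, hend₂⟩ := exists_endsAtSigned_of_trailEnd_eq hx₂ hxr
    rcases Bool.eq_or_eq_not β α with rfl | rfl
    · obtain ⟨Z, hZ, hZend⟩ := hsigned (!β)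
      exact hclean.not_isConflict ⟨hxr, h₁, h₂, hZ, hend₁, hend₂, hZend, hdisj⟩
    · exact hclean.not_edgeDisj_of_opposite_signs hxr h₁ h₂ hend₁ hend₂ hdisj

open BidirGraph in
/-- In an edge-clean, trail-reachable rooted bidirected graph, the maximum
number of pairwise edge-disjoint `r`–`x` trails to a vertex `x` of a trail-undirectable
component equals 1. -/
theorem stmt6 {V E : Type} (B : BidirGraph V E) (r : V)
    (hclean : B.EdgeClean r) (hreach : B.TrailReachable r)
    (x : V) (hx : ∃ C : Set E, B.IsUComp r C ∧ B.VC C x) :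
    (∃ L, B.IsRTrail r L ∧ B.trailEnd r L = x) ∧
      ¬ ∃ L₁ L₂, (B.IsRTrail r L₁ ∧ B.trailEnd r L₁ = x) ∧
        (B.IsRTrail r L₂ ∧ B.trailEnd r L₂ = x) ∧ BidirGraph.EdgeDisj L₁ L₂ :=
  stmt6_general B r hclean x hx
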